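/- arXiv:1701.07118 — 6 statements merged into one kernel-verified Lean document; each statement's English description precedes it below -/
import Mathlib

section
/- Let B = GF(q) with q = p^m and F = GF(q^t). For any u, α ∈ F, the polynomial p_{u,α}(X) satisfies p_{u,α}(α) = u. -/
/-!
Differentiate `(X - α) · P = Σᵢ (u(X - α))^{qⁱ}` and evaluate at `α`: the left side gives `P(α)`.
On the right, `(fⁿ)' = n f^{n-1} f'` vanishes at a root of `f` unless `n = 1`, and since `q ≥ 2`
only the term `i = 0` has exponent `1`; it contributes `(u(X - α))' = u`.
-/

open Polynomial

namespace Polynomial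

variable {R : Type*} [CommRing R]

theorem eval_derivative_X_sub_C_mul (a : R) (P : R[X]) :
    (derivative ((X - C a) * P)).eval a = P.eval a := by
  simp [derivative_mul]

theorem eval_derivative_pow_of_isRoot {f : R[X]} {a : R} (hf : f.IsRoot a) (n : ℕ) :
    (derivative (f ^ n)).eval a = if n = 1 then (derivative f).eval a else 0 := by
  rcases Nat.lt_trichotomy n 1 with hn | rfl | hn
  · simp [Nat.lt_one_iff.mp hn]
  · simp
  · have : n - 1 ≠ 0 := by omega
    simp [derivative_pow, hf.eq_zero, zero_pow this, hn.ne']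

theorem eval_derivative_C_mul_X_sub_C_pow (u a : R) (n : ℕ) :
    (derivative ((C u * (X - C a)) ^ n)).eval a = if n = 1 then u else 0 := by
  rw [eval_derivative_pow_of_isRoot (by simp)]
  simp

end Polynomial

theorem check_polynomial_eval_center_general (p m t : ℕ) (hp : p.Prime) (hm : 1 ≤ m) (ht : 1 ≤ t)
    (F : Type*) [Field F]
    (u α : F)
    (P : F[X])
    (hP : (X - C α) * P = ∑ i ∈ Finset.range t, (C u * (X - C α)) ^ ((p ^ m) ^ i)) :
    P.eval α = u := by
  have hq : p ^ m ≠ 1 := (Nat.one_lt_pow (by omega) hp.one_lt).ne'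
  have exponent_eq_one (i : ℕ) : (p ^ m) ^ i = 1 ↔ i = 0 :=
    Nat.pow_eq_one.trans (or_iff_right hq)
  rw [← eval_derivative_X_sub_C_mul, hP, derivative_sum, eval_finsetSum]
  simp only [eval_derivative_C_mul_X_sub_C_pow, exponent_eq_one, Finset.sum_ite_eq']
  exact if_pos (Finset.mem_range.mpr ht)

/-- The polynomial `p_{u,α}` satisfies `p_{u,α}(α) = u`. -/
theorem check_polynomial_eval_center (p m t : ℕ) (hp : p.Prime) (hm : 1 ≤ m) (ht : 1 ≤ t)
    (F : Type*) [Field F] [Fintype F] (hF : Fintype.card F = (p ^ m) ^ t)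
    (u α : F)
    (P : F[X])
    (hP : (X - C α) * P = ∑ i ∈ Finset.range t, (C u * (X - C α)) ^ ((p ^ m) ^ i)) :
    P.eval α = u :=
  check_polynomial_eval_center_general p m t hp hm ht F u α P hP
end

section
/- Let B = GF(q) with q = p^m, F = GF(q^t), and Tr the trace from F to B. For any u ∈ F, any distinct α, α* ∈ F, and any c ∈ F, one has Tr(p_{u,α*}(α)·c) = Tr(u(α-α*)) · Tr(c·(α-α*)^{-1}), where the product on the right is taken in B ⊆ F. -/
/-!
Evaluating the defining identity of `P = p_{u,α*}` at `α` gives `P(α) = s / (α - α*)` with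
`s = Tr(u(α - α*))`. Since `q` is a power of the characteristic, `x ↦ x ^ q` is additive, and it
permutes the summands of `Tr` cyclically because `x ^ (q ^ t) = x`; so `s ^ q = s`. Such an `s`
passes through every `(s y) ^ (q ^ i)`, whence `Tr(s y) = s Tr(y)`.
-/

open Polynomial Finset

namespace FiniteField

theorem sum_pow_eq_sum_pow_of_card_eq_pow {F : Type*} [Field F] [Fintype F] {q t : ℕ}
    (hF : Fintype.card F = q ^ t) {ι : Type*} (s : Finset ι) (f : ι → F) :
    (∑ i ∈ s, f i) ^ q = ∑ i ∈ s, f i ^ q := by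
  obtain ⟨ℓ, _, n, hℓ, hcard⟩ := FiniteField.card' F
  have : ExpChar F ℓ := ExpChar.prime hℓ
  have ht : t ≠ 0 := by
    rintro rfl
    exact (Fintype.one_lt_card (α := F)).ne' (by simpa using hF)
  obtain ⟨k, -, rfl⟩ := (Nat.dvd_prime_pow hℓ).1 (hcard ▸ hF ▸ dvd_pow_self q ht)
  exact sum_pow_char_pow ℓ k s f

end FiniteField

theorem pow_pow_eq_self_of_pow_eq_self {M : Type*} [Monoid M] {s : M} {q : ℕ} (hs : s ^ q = s)
    (i : ℕ) : s ^ q ^ i = s := by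
  induction i with
  | zero => exact pow_one s
  | succ i ih => rw [pow_succ, pow_mul, ih, hs]

section FrobeniusTrace

variable {R : Type*} [CommSemiring R] {q t : ℕ}

/-- `Tr_{F/B}` for a field `F` of order `q ^ t` and its subfield `B` of order `q`. -/
def frobeniusTrace (q t : ℕ) (x : R) : R := ∑ i ∈ range t, x ^ q ^ i

theorem frobeniusTrace_mul_of_pow_eq_self {s : R} (hs : s ^ q = s) (y : R) :
    frobeniusTrace q t (s * y) = s * frobeniusTrace q t y := by
  simp only [frobeniusTrace, mul_sum, mul_pow, pow_pow_eq_self_of_pow_eq_self hs]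

theorem frobeniusTrace_pow {F : Type*} [Field F] [Fintype F] (hF : Fintype.card F = q ^ t)
    (x : F) : frobeniusTrace q t x ^ q = frobeniusTrace q t x := by
  have hshift : ∑ i ∈ range t, x ^ q ^ (i + 1) + x ^ q ^ 0 =
      ∑ i ∈ range t, x ^ q ^ i + x ^ q ^ t :=
    (sum_range_succ' (fun i ↦ x ^ q ^ i) t).symm.trans (sum_range_succ _ t)
  rw [← hF, FiniteField.pow_card, pow_zero, pow_one, add_left_inj] at hshift
  simp only [frobeniusTrace, FiniteField.sum_pow_eq_sum_pow_of_card_eq_pow hF, ← pow_mul,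
    ← pow_succ, hshift]

end FrobeniusTrace

theorem trace_check_mul_general (p m t : ℕ)
    (F : Type*) [Field F] [Fintype F] (hF : Fintype.card F = (p ^ m) ^ t)
    (u αs α c : F) (hne : α ≠ αs)
    (P : F[X])
    (hP : (X - C αs) * P = ∑ i ∈ Finset.range t, (C u * (X - C αs)) ^ ((p ^ m) ^ i)) :
    ∑ i ∈ Finset.range t, (P.eval α * c) ^ ((p ^ m) ^ i) =
      (∑ i ∈ Finset.range t, (u * (α - αs)) ^ ((p ^ m) ^ i)) *
        (∑ i ∈ Finset.range t, (c * (α - αs)⁻¹) ^ ((p ^ m) ^ i)) := by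
  change frobeniusTrace _ _ _ = frobeniusTrace _ _ _ * frobeniusTrace _ _ _
  have hPα : (α - αs) * P.eval α = frobeniusTrace (p ^ m) t (u * (α - αs)) := by
    simpa [eval_finsetSum, frobeniusTrace] using congrArg (eval α) hP
  rw [(eq_mul_inv_iff_mul_eq₀ (sub_ne_zero.mpr hne)).2 ((mul_comm _ _).trans hPα), mul_assoc,
    mul_comm _ c]
  exact frobeniusTrace_mul_of_pow_eq_self (frobeniusTrace_pow hF _) _

/-- `Tr(p_{u,α*}(α)·c) = Tr(u(α-α*)) · Tr(c·(α-α*)⁻¹)` for `α ≠ α*`. -/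
theorem trace_check_mul (p m t : ℕ) (hp : p.Prime) (hm : 1 ≤ m) (ht : 1 ≤ t)
    (F : Type*) [Field F] [Fintype F] (hF : Fintype.card F = (p ^ m) ^ t)
    (u αs α c : F) (hne : α ≠ αs)
    (P : F[X])
    (hP : (X - C αs) * P = ∑ i ∈ Finset.range t, (C u * (X - C αs)) ^ ((p ^ m) ^ i)) :
    ∑ i ∈ Finset.range t, (P.eval α * c) ^ ((p ^ m) ^ i) =
      (∑ i ∈ Finset.range t, (u * (α - αs)) ^ ((p ^ m) ^ i)) *
        (∑ i ∈ Finset.range t, (c * (α - αs)⁻¹) ^ ((p ^ m) ^ i)) :=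
  trace_check_mul_general p m t F hF u αs α c hne P hP
end

section
/- Let B = GF(q) with q = p^m, F = GF(q^t), and Tr the trace from F to B. Let k ≤ |F| - q^{t-1}. Then for any u ∈ F, any α* ∈ F, and any polynomial f ∈ F[X] with deg(f) < k, the repair equation Tr(u·f(α*)) = - Σ_{α ∈ F, α ≠ α*} Tr(u(α-α*)) · Tr(f(α)·(α-α*)^{-1}) holds. -/
open Polynomial

/-!
Put `q = p ^ m` and `g = ∑_{i < t} u^{q^i} (X - α*)^{q^i - 1}` (Guruswami–Wootters). Then
`g(α*) = u`, and `g(α) = Tr(u(α - α*)) / (α - α*)` for `α ≠ α*`. Since `deg g ≤ q^{t-1} - 1` and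
`deg f < q^t - q^{t-1}`, the polynomial `g f` has degree `< |F| - 1`, so its values sum to zero
over `F`; hence `u f(α*) = -∑_{α ≠ α*} g(α) f(α)`. Applying the trace, which is additive and pulls
out factors lying in `B` (they are fixed by `x ↦ x^q`), gives the repair equation.
-/

open Finset

section FrobeniusTrace

variable {R : Type*} [CommRing R] (p : ℕ) [ExpChar R p] (m t : ℕ)

def frobTrace : R →+ R :=
  AddMonoidHom.mk' (fun x => ∑ i ∈ range t, x ^ (p ^ m) ^ i) fun x y => by
    simp only [← pow_mul, add_pow_expChar_pow, sum_add_distrib]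

theorem frobTrace_apply (x : R) : frobTrace p m t x = ∑ i ∈ range t, x ^ (p ^ m) ^ i := rfl

variable {p m t}

theorem frobTrace_pow_eq_self {x : R} (hx : x ^ (p ^ m) ^ t = x) :
    frobTrace p m t x ^ p ^ m = frobTrace p m t x := by
  have hshift : frobTrace p m t x ^ p ^ m = ∑ i ∈ range t, x ^ (p ^ m) ^ (i + 1) := by
    rw [frobTrace_apply, ← iterateFrobenius_def, map_sum]
    simp only [iterateFrobenius_def, ← pow_mul, pow_succ]
  have hcycle := sum_range_succ' (fun i => x ^ (p ^ m) ^ i) t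
  rw [sum_range_succ, hx, pow_zero, pow_one] at hcycle
  rw [hshift, frobTrace_apply]
  exact add_right_cancel hcycle.symm

theorem frobTrace_pow_pow_eq_self {x : R} (hx : x ^ (p ^ m) ^ t = x) (i : ℕ) :
    frobTrace p m t x ^ (p ^ m) ^ i = frobTrace p m t x := by
  induction i with
  | zero => rw [pow_zero, pow_one]
  | succ i ih => rw [pow_succ, pow_mul, ih, frobTrace_pow_eq_self hx]

theorem frobTrace_frobTrace_mul {x : R} (hx : x ^ (p ^ m) ^ t = x) (y : R) :
    frobTrace p m t (frobTrace p m t x * y) = frobTrace p m t x * frobTrace p m t y := by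
  rw [frobTrace_apply, frobTrace_apply p m t y, mul_sum]
  refine sum_congr rfl fun i _ => ?_
  rw [mul_pow, frobTrace_pow_pow_eq_self hx]

end FrobeniusTrace

section RepairPoly

variable {R : Type*} [CommRing R] (q t : ℕ) (u a : R)

noncomputable def repairPoly : R[X] := ∑ i ∈ range t, C (u ^ q ^ i) * (X - C a) ^ (q ^ i - 1)

variable {q t}

theorem repairPoly_eval_self (hq : 1 < q) (ht : 0 < t) : (repairPoly q t u a).eval a = u := by
  rw [repairPoly, eval_finsetSum, sum_eq_single_of_mem 0 (mem_range.mpr ht)]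
  · simp
  · intro i _ hi
    have : q ^ i - 1 ≠ 0 := by
      have := Nat.one_lt_pow hi hq
      omega
    simp [zero_pow this]

theorem natDegree_repairPoly_le (hq : 0 < q) :
    (repairPoly q t u a).natDegree ≤ q ^ (t - 1) - 1 := by
  refine natDegree_sum_le_of_forall_le _ _ fun i hi => ?_
  refine (natDegree_C_mul_le _ _).trans <|
    (natDegree_pow_le_of_le _ (natDegree_X_sub_C_le a)).trans ?_
  have := Nat.pow_le_pow_right hq (Nat.le_sub_one_of_lt (mem_range.mp hi))
  omega

end RepairPoly

theorem repairPoly_eval_of_ne {K : Type*} [Field K] {q : ℕ} (t : ℕ) (u a : K) (hq : 0 < q)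
    {α : K} (hα : α ≠ a) :
    (repairPoly q t u a).eval α = (∑ i ∈ range t, (u * (α - a)) ^ q ^ i) * (α - a)⁻¹ := by
  rw [repairPoly, eval_finsetSum, sum_mul]
  refine sum_congr rfl fun i _ => ?_
  simp only [eval_mul, eval_C, eval_pow, eval_sub, eval_X]
  rw [mul_pow, ← pow_sub_one_mul (pow_pos hq i).ne' (α - a), ← mul_assoc,
    mul_inv_cancel_right₀ (sub_ne_zero.mpr hα)]

section FiniteField

variable {K : Type*} [Field K] [Fintype K]

theorem sum_eval_eq_zero_of_natDegree_lt {P : K[X]} (hP : P.natDegree < Fintype.card K - 1) :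
    ∑ x, P.eval x = 0 := by
  simp only [eval_eq_sum_range]
  rw [sum_comm]
  refine sum_eq_zero fun i hi => ?_
  rw [← mul_sum, FiniteField.sum_pow_lt_card_sub_one K i (by grind), mul_zero]

theorem eval_eq_neg_sum_eval_erase [DecidableEq K] {P : K[X]}
    (hP : P.natDegree < Fintype.card K - 1) (a : K) :
    P.eval a = -∑ x ∈ univ.erase a, P.eval x := by
  rw [eq_neg_iff_add_eq_zero, add_sum_erase _ (P.eval ·) (mem_univ a),
    sum_eval_eq_zero_of_natDegree_lt hP]

end FiniteField

/-- The Guruswami–Wootters repair equation: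
`Tr(u·f(α*)) = - ∑_{α ≠ α*} Tr(u(α-α*)) · Tr(f(α)·(α-α*)⁻¹)`. -/
theorem repair_equation (p m t k : ℕ) (hp : p.Prime) (hm : 1 ≤ m) (ht : 1 ≤ t)
    (F : Type*) [Field F] [Fintype F] [DecidableEq F] (hF : Fintype.card F = (p ^ m) ^ t)
    (hk : k ≤ Fintype.card F - (p ^ m) ^ (t - 1))
    (u αs : F)
    (f : F[X]) (hf : f.degree < (k : WithBot ℕ)) :
    ∑ i ∈ Finset.range t, (u * f.eval αs) ^ ((p ^ m) ^ i) =
      -∑ α ∈ Finset.univ.erase αs,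
        (∑ i ∈ Finset.range t, (u * (α - αs)) ^ ((p ^ m) ^ i)) *
          (∑ i ∈ Finset.range t, (f.eval α * (α - αs)⁻¹) ^ ((p ^ m) ^ i)) := by
  have : Fact p.Prime := ⟨hp⟩
  have : CharP F p := charP_of_card_eq_prime_pow (hF.trans (pow_mul p m t).symm)
  have hq : 1 < p ^ m := Nat.one_lt_pow (by omega) hp.one_lt
  have hpow (x : F) : x ^ (p ^ m) ^ t = x := by rw [← hF]; exact FiniteField.pow_card x
  have hfdeg : f.natDegree + (p ^ m) ^ (t - 1) < (p ^ m) ^ t := by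
    have hlt : (p ^ m) ^ (t - 1) < (p ^ m) ^ t := Nat.pow_lt_pow_right hq (by omega)
    rcases eq_or_ne f 0 with rfl | hf0
    · simpa using hlt
    · have := (natDegree_lt_iff_degree_lt hf0).mpr hf
      omega
  have hdeg : (repairPoly (p ^ m) t u αs * f).natDegree < Fintype.card F - 1 := by
    have := natDegree_repairPoly_le u αs (t := t) (by omega : 0 < p ^ m)
    have := natDegree_mul_le (p := repairPoly (p ^ m) t u αs) (q := f)
    have := Nat.one_le_pow (t - 1) (p ^ m) (by omega)
    omega
  have hsum := eval_eq_neg_sum_eval_erase hdeg αs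
  rw [eval_mul, repairPoly_eval_self u αs hq ht] at hsum
  change frobTrace p m t _ = -∑ α ∈ _, frobTrace p m t _ * frobTrace p m t _
  rw [hsum, map_neg, map_sum]
  congr 1
  refine sum_congr rfl fun α hα => ?_
  rw [eval_mul, repairPoly_eval_of_ne t u αs (by omega) (ne_of_mem_erase hα), ← frobTrace_apply,
    mul_assoc, frobTrace_frobTrace_mul (hpow _), mul_comm (α - αs)⁻¹]
end

section
/- Let B = GF(q) with q = p^m, F = GF(q^t), and Tr the trace from F to B, and suppose t is divisible by p = char(F). Let α*, ᾱ ∈ F be distinct, let v_1, …, v_{t-1} be a basis over B of the subspace K_{α*,ᾱ} = {z ∈ F : Tr(z(ᾱ-α*)) = 0}, and set q_i(X) = p_{v_i,ᾱ}(X) for i = 1,…,t-1. Then for every u_t ∈ F, the element p_{u_t,α*}(ᾱ) lies in the B-linear span of {q_1(ᾱ), …, q_{t-1}(ᾱ)}. -/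
open Polynomial

/-!
Since `X - α` divides every term beyond the first of the sum defining `p_{u,α}`, we get
`p_{v_i,ᾱ}(ᾱ) = v_i`, so the span in question is `K_{α*,ᾱ}` itself. Evaluating the identity
defining `p_{u_t,α*}` at `ᾱ` gives `p_{u_t,α*}(ᾱ) (ᾱ - α*) = Tr(u_t (ᾱ - α*))`, an element `c`
of `B`; hence `Tr(p_{u_t,α*}(ᾱ) (ᾱ - α*)) = Tr(c) = t c = 0` because `p ∣ t`.
-/

section PowTrace

variable {R S : Type*} [CommRing R]

/-- With `q = #B` and `t = [F : B]` this is `Tr_{F/B}`. -/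
def powTrace (q t : ℕ) (y : R) : R := ∑ i ∈ Finset.range t, y ^ q ^ i

theorem map_powTrace [CommRing S] (f : R →+* S) (q t : ℕ) (y : R) :
    f (powTrace q t y) = powTrace q t (f y) := by
  simp only [powTrace, map_sum, map_pow]

theorem powTrace_pow_eq_self {p m t : ℕ} [ExpChar R p] {y : R} (hy : y ^ (p ^ m) ^ t = y) :
    powTrace (p ^ m) t y ^ p ^ m = powTrace (p ^ m) t y := by
  have hshift := (Finset.sum_range_succ' (fun i => y ^ (p ^ m) ^ i) t).symm.trans
    (Finset.sum_range_succ _ t)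
  rw [hy, pow_zero, pow_one] at hshift
  have hfrob : ∀ i, (y ^ (p ^ m) ^ i) ^ p ^ m = y ^ (p ^ m) ^ (i + 1) := fun i => by
    rw [← pow_mul, ← pow_succ]
  rw [powTrace, sum_pow_char_pow]
  simpa only [hfrob] using add_right_cancel hshift

theorem powTrace_eq_mul_of_pow_eq_self {q t : ℕ} {c : R} (hc : c ^ q = c) :
    powTrace q t c = t * c := by
  have hci : ∀ i, c ^ q ^ i = c := by
    intro i
    induction i with
    | zero => exact pow_one c
    | succ i ih => rw [pow_succ, pow_mul, ih, hc]
  simp only [powTrace, hci, Finset.sum_const, Finset.card_range, nsmul_eq_mul]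

theorem powTrace_powTrace_eq_zero {p m t : ℕ} [Fact p.Prime] [CharP R p] (hpt : p ∣ t) {y : R}
    (hy : y ^ (p ^ m) ^ t = y) : powTrace (p ^ m) t (powTrace (p ^ m) t y) = 0 := by
  rw [powTrace_eq_mul_of_pow_eq_self (powTrace_pow_eq_self hy),
    (CharP.cast_eq_zero_iff R p t).2 hpt, zero_mul]

end PowTrace

theorem eval_eq_of_X_sub_C_mul_eq_powTrace {R : Type*} [CommRing R] {q t : ℕ} (hq : 2 ≤ q)
    (ht : 1 ≤ t) {a u : R} {P : R[X]} (hP : (X - C a) * P = powTrace q t (C u * (X - C a))) :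
    P.eval a = u := by
  have hfactor : powTrace q t (C u * (X - C a)) =
      (X - C a) * ∑ i ∈ Finset.range t, C u ^ q ^ i * (X - C a) ^ (q ^ i - 1) := by
    rw [powTrace, Finset.mul_sum]
    refine Finset.sum_congr rfl fun i _ => ?_
    rw [mul_pow, mul_left_comm, ← pow_succ', Nat.sub_add_cancel (Nat.one_le_pow _ _ (by omega))]
  rw [(monic_X_sub_C a).isRegular.left (hP.trans hfactor), eval_finsetSum]
  obtain ⟨s, rfl⟩ := Nat.exists_eq_add_of_le' ht
  have hexp : ∀ i, q ^ (i + 1) - 1 ≠ 0 := fun i =>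
    Nat.sub_ne_zero_of_lt (Nat.one_lt_pow (Nat.succ_ne_zero i) (by omega))
  simp [Finset.sum_range_succ', hexp]

theorem missing_trace_dependence_general (p m t : ℕ) (hp : p.Prime)
    (hm : 1 ≤ m) (ht : 1 ≤ t) (hpt : p ∣ t)
    (B F : Type*) [Field B] [Field F] [Algebra B F] [Fintype F]
    (hF : Fintype.card F = (p ^ m) ^ t)
    (αs αb : F)
    (v : Fin (t - 1) → F)
    (hv_span : (Submodule.span B (Set.range v) : Set F) =
      {z : F | ∑ i ∈ Finset.range t, (z * (αb - αs)) ^ ((p ^ m) ^ i) = 0})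
    (Q : Fin (t - 1) → F[X])
    (hQ : ∀ j, (X - C αb) * Q j =
      ∑ i ∈ Finset.range t, (C (v j) * (X - C αb)) ^ ((p ^ m) ^ i))
    (ut : F) (Pt : F[X])
    (hPt : (X - C αs) * Pt =
      ∑ i ∈ Finset.range t, (C ut * (X - C αs)) ^ ((p ^ m) ^ i)) :
    Pt.eval αb ∈ Submodule.span B (Set.range fun j => (Q j).eval αb) := by
  have : Fact p.Prime := ⟨hp⟩
  have : CharP F p := charP_of_card_eq_prime_pow (hF.trans (pow_mul p m t).symm)
  simp only [← powTrace.eq_1] at hQ hPt hv_span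
  have hq : 2 ≤ p ^ m := hp.two_le.trans (Nat.le_self_pow (by omega) p)
  have hQv : ∀ j, (Q j).eval αb = v j := fun j => eval_eq_of_X_sub_C_mul_eq_powTrace hq ht (hQ j)
  have hPt_eval : Pt.eval αb * (αb - αs) = powTrace (p ^ m) t (ut * (αb - αs)) := by
    simpa [map_powTrace, mul_comm] using congrArg (evalRingHom αb) hPt
  rw [funext hQv, ← SetLike.mem_coe, hv_span, Set.mem_ofPred_eq, hPt_eval]
  exact powTrace_powTrace_eq_zero hpt (by rw [← hF, FiniteField.pow_card])

/-- If `p = char F` divides `t`, and `v_1, …, v_{t-1}` is a `B`-basis of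
`K_{α*,ᾱ}` with `q_i = p_{v_i, ᾱ}`, then for every `u_t ∈ F` the element
`p_{u_t,α*}(ᾱ)` lies in the `B`-span of `{q_1(ᾱ), …, q_{t-1}(ᾱ)}`. -/
theorem missing_trace_dependence (p m t : ℕ) (hp : p.Prime)
    (hm : 1 ≤ m) (ht : 1 ≤ t) (hpt : p ∣ t)
    (B F : Type*) [Field B] [Field F] [Algebra B F] [Fintype B] [Fintype F]
    (hB : Fintype.card B = p ^ m) (hF : Fintype.card F = (p ^ m) ^ t)
    (αs αb : F) (hne : αs ≠ αb)
    (v : Fin (t - 1) → F)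
    (hv_li : LinearIndependent B v)
    (hv_span : (Submodule.span B (Set.range v) : Set F) =
      {z : F | ∑ i ∈ Finset.range t, (z * (αb - αs)) ^ ((p ^ m) ^ i) = 0})
    (Q : Fin (t - 1) → F[X])
    (hQ : ∀ j, (X - C αb) * Q j =
      ∑ i ∈ Finset.range t, (C (v j) * (X - C αb)) ^ ((p ^ m) ^ i))
    (ut : F) (Pt : F[X])
    (hPt : (X - C αs) * Pt =
      ∑ i ∈ Finset.range t, (C ut * (X - C αs)) ^ ((p ^ m) ^ i)) :
    Pt.eval αb ∈ Submodule.span B (Set.range fun j => (Q j).eval αb) :=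
  missing_trace_dependence_general p m t hp hm ht hpt B F hF αs αb v hv_span Q hQ ut Pt hPt
end

section
/- Let B = GF(q) with q = p^m, F = GF(q^t), and Tr the trace from F to B, and suppose t is divisible by p = char(F). Let α*, ᾱ ∈ F be distinct, let v_1, …, v_{t-1} be a basis over B of K_{α*,ᾱ} = {z ∈ F : Tr(z(ᾱ-α*)) = 0}, set q_i(X) = p_{v_i,ᾱ}(X), and fix u_t ∈ F with p_t(X) = p_{u_t,α*}(X). Then there exist coefficients c_1, …, c_{t-1} ∈ B, depending only on α*, ᾱ, u_t and v_1,…,v_{t-1} (and not on w), such that for every w ∈ F: Tr(p_t(ᾱ)·w) = Σ_{i=1}^{t-1} c_i · Tr(q_i(ᾱ)·w). -/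
open Polynomial

/-!
Write `Tr` for the explicit trace sum, which is `algebraMap` of `Algebra.trace B F`.
Evaluating the defining identities at the base point gives `q_j(ᾱ) = v_j` and
`(ᾱ - α*) p_t(ᾱ) = Tr(u_t (ᾱ - α*)) ∈ B`. An element `b` of `B` has trace `t • b`, which
vanishes because `p ∣ t`; hence `p_t(ᾱ) ∈ K_{α*,ᾱ}`, so `p_t(ᾱ) = ∑ c_j v_j`, and
`B`-linearity of the trace gives the identity for every `w`.
-/

theorem Polynomial.eval_eq_of_X_sub_C_mul_eq_sum_pow {R : Type*} [CommRing R] [IsDomain R]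
    {q t : ℕ} (hq : 1 < q) (ht : 1 ≤ t) {a v : R} {Q : R[X]}
    (hQ : (X - C a) * Q = ∑ i ∈ Finset.range t, (C v * (X - C a)) ^ (q ^ i)) :
    Q.eval a = v := by
  have hdvd : (X - C a) ^ 2 ∣ ∑ i ∈ Finset.range (t - 1), (C v * (X - C a)) ^ (q ^ (i + 1)) :=
    Finset.dvd_sum fun i _ => by
      rw [mul_pow]
      exact (pow_dvd_pow _ (Nat.one_lt_pow i.succ_ne_zero hq)).mul_left _
  obtain ⟨R, hR⟩ := hdvd
  have hsplit : (X - C a) * Q = (X - C a) * (C v + (X - C a) * R) := by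
    rw [hQ, ← Nat.sub_add_cancel ht, Finset.sum_range_succ', hR]
    ring
  rw [mul_left_cancel₀ (X_sub_C_ne_zero a) hsplit]
  simp

theorem Module.finrank_eq_of_card_eq_card_pow {B F : Type*} [Field B] [Field F] [Algebra B F]
    [Fintype B] [Fintype F] {t : ℕ} (hF : Fintype.card F = Fintype.card B ^ t) :
    Module.finrank B F = t := by
  rw [Module.card_eq_pow_finrank (K := B)] at hF
  exact Nat.pow_right_injective (Fintype.one_lt_card (α := B)) hF

theorem FiniteField.sum_pow_eq_algebraMap_trace {B F : Type*} [Field B] [Field F] [Algebra B F]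
    [Fintype B] [Fintype F] {t : ℕ} (hF : Fintype.card F = Fintype.card B ^ t) (x : F) :
    ∑ i ∈ Finset.range t, x ^ (Fintype.card B ^ i) = algebraMap B F (Algebra.trace B F x) := by
  rw [algebraMap_trace_eq_sum_pow, Module.finrank_eq_of_card_eq_card_pow hF,
    Nat.card_eq_fintype_card]

theorem Algebra.trace_algebraMap_eq_zero_of_dvd {B F : Type*} [Field B] [Field F] [Algebra B F]
    (p : ℕ) [CharP B p] (hp : p ∣ Module.finrank B F) (b : B) :
    Algebra.trace B F (algebraMap B F b) = 0 := by
  rw [trace_algebraMap, nsmul_eq_mul, (CharP.cast_eq_zero_iff B p _).mpr hp, zero_mul]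

theorem missing_trace_combination_general (p m t : ℕ) (hp : p.Prime)
    (ht : 1 ≤ t) (hpt : p ∣ t)
    (B F : Type*) [Field B] [Field F] [Algebra B F] [Fintype B] [Fintype F]
    (hB : Fintype.card B = p ^ m) (hF : Fintype.card F = (p ^ m) ^ t)
    (αs αb : F)
    (v : Fin (t - 1) → F)
    (hv_span : (Submodule.span B (Set.range v) : Set F) =
      {z : F | ∑ i ∈ Finset.range t, (z * (αb - αs)) ^ ((p ^ m) ^ i) = 0})
    (Q : Fin (t - 1) → F[X])
    (hQ : ∀ j, (X - C αb) * Q j =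
      ∑ i ∈ Finset.range t, (C (v j) * (X - C αb)) ^ ((p ^ m) ^ i))
    (ut : F) (Pt : F[X])
    (hPt : (X - C αs) * Pt =
      ∑ i ∈ Finset.range t, (C ut * (X - C αs)) ^ ((p ^ m) ^ i)) :
    ∃ c : Fin (t - 1) → B, ∀ w : F,
      ∑ i ∈ Finset.range t, (Pt.eval αb * w) ^ ((p ^ m) ^ i) =
        ∑ j : Fin (t - 1), algebraMap B F (c j) *
          ∑ i ∈ Finset.range t, ((Q j).eval αb * w) ^ ((p ^ m) ^ i) := by
  have : Fact p.Prime := ⟨hp⟩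
  have : CharP B p := charP_of_card_eq_prime_pow hB
  rw [← hB] at hF hv_span hQ hPt ⊢
  have hTr := FiniteField.sum_pow_eq_algebraMap_trace hF
  have hQ_eval j : (Q j).eval αb = v j :=
    eval_eq_of_X_sub_C_mul_eq_sum_pow Fintype.one_lt_card ht (hQ j)
  have hPt_eval :
      (αb - αs) * Pt.eval αb = algebraMap B F (Algebra.trace B F (ut * (αb - αs))) := by
    simpa [eval_finsetSum, hTr] using congrArg (eval αb) hPt
  have hmem : Pt.eval αb ∈ Submodule.span B (Set.range v) := by
    rw [← SetLike.mem_coe, hv_span, Set.mem_ofPred_eq, hTr, mul_comm, hPt_eval,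
      Algebra.trace_algebraMap_eq_zero_of_dvd p
        (by rwa [Module.finrank_eq_of_card_eq_card_pow hF]), map_zero]
  obtain ⟨c, hc⟩ := (Submodule.mem_span_range_iff_exists_fun B).mp hmem
  refine ⟨c, fun w => ?_⟩
  rw [hTr, ← hc, Finset.sum_mul, map_sum, map_sum]
  refine Finset.sum_congr rfl fun j _ => ?_
  rw [hTr, hQ_eval, smul_mul_assoc, map_smul, smul_eq_mul, map_mul]

/-- If `p = char F` divides `t`, then there are coefficients `c_i ∈ B`, independent
of `w`, with `Tr(p_t(ᾱ)·w) = ∑_i c_i · Tr(q_i(ᾱ)·w)` for every `w ∈ F`. -/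
theorem missing_trace_combination (p m t : ℕ) (hp : p.Prime)
    (hm : 1 ≤ m) (ht : 1 ≤ t) (hpt : p ∣ t)
    (B F : Type*) [Field B] [Field F] [Algebra B F] [Fintype B] [Fintype F]
    (hB : Fintype.card B = p ^ m) (hF : Fintype.card F = (p ^ m) ^ t)
    (αs αb : F) (hne : αs ≠ αb)
    (v : Fin (t - 1) → F)
    (hv_li : LinearIndependent B v)
    (hv_span : (Submodule.span B (Set.range v) : Set F) =
      {z : F | ∑ i ∈ Finset.range t, (z * (αb - αs)) ^ ((p ^ m) ^ i) = 0})
    (Q : Fin (t - 1) → F[X])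
    (hQ : ∀ j, (X - C αb) * Q j =
      ∑ i ∈ Finset.range t, (C (v j) * (X - C αb)) ^ ((p ^ m) ^ i))
    (ut : F) (Pt : F[X])
    (hPt : (X - C αs) * Pt =
      ∑ i ∈ Finset.range t, (C ut * (X - C αs)) ^ ((p ^ m) ^ i)) :
    ∃ c : Fin (t - 1) → B, ∀ w : F,
      ∑ i ∈ Finset.range t, (Pt.eval αb * w) ^ ((p ^ m) ^ i) =
        ∑ j : Fin (t - 1), algebraMap B F (c j) *
          ∑ i ∈ Finset.range t, ((Q j).eval αb * w) ^ ((p ^ m) ^ i) :=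
  missing_trace_combination_general p m t hp ht hpt B F hB hF αs αb v hv_span Q hQ ut Pt hPt
end

section
/- Let B = GF(q) with q = p^m, F = GF(q^t), and Tr the trace from F to B. Let α*, ᾱ ∈ F be distinct. Let u_1, …, u_{t-1} be a basis over B of K_{α*,ᾱ} = {z ∈ F : Tr(z(ᾱ-α*)) = 0}, extended by u_t ∈ F to a basis u_1,…,u_t of F over B, and let v_1, …, v_{t-1} be another basis of K_{α*,ᾱ} over B. Set p_i(X) = p_{u_i,α*}(X). Then: (i) p_{u_t,α*}(ᾱ) = p_t(ᾱ) ≠ 0, so τ := v_1 / p_t(ᾱ) is a well-defined nonzero element of F; and the polynomials p*_i(X) := τ·p_i(X), i = 1,…,t, satisfy (P1) p*_i(ᾱ) = 0 for all i = 1,…,t-1; (P2) p*_t(ᾱ) = v_1 ≠ 0; and (P3) {p*_1(α*), …, p*_t(α*)} is a basis of F over B. -/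
/-!
Writing `(X - α)·p = Σᵢ (u(X - α))^{qⁱ}` as `(X - α)·Σᵢ u^{qⁱ}(X - α)^{qⁱ-1}` and evaluating at `α`
gives `p_{u,α}(α) = u`; evaluating at `β ≠ α` gives `p_{u,α}(β) = 0 ↔ u ∈ K_{α,β}`. Hence
`p_i(ᾱ) = 0` for `i < t`, while `p_t(ᾱ) ≠ 0` because `u_t` lies outside
`span(u_1, …, u_{t-1}) = K_{α*,ᾱ}`. Finally `p*_i(α*) = τ u_i`, and multiplication by `τ ≠ 0`
is a `B`-linear automorphism of `F`, so it carries the basis `u` to a basis.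
-/

open Polynomial

namespace Polynomial

variable {R : Type*} [CommRing R] {P : R[X]} {a u : R} {q t : ℕ}

theorem sum_pow_C_mul_X_sub_C (hq : 1 ≤ q) :
    ∑ i ∈ Finset.range t, (C u * (X - C a)) ^ (q ^ i) =
      (X - C a) * ∑ i ∈ Finset.range t, C u ^ (q ^ i) * (X - C a) ^ (q ^ i - 1) := by
  rw [Finset.mul_sum]
  refine Finset.sum_congr rfl fun i _ => ?_
  obtain ⟨n, hn⟩ : ∃ n, q ^ i = n + 1 := ⟨q ^ i - 1, by have := Nat.one_le_pow i q hq; omega⟩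
  rw [hn, Nat.add_sub_cancel, mul_pow, pow_succ]
  ring

theorem eval_self_of_X_sub_C_mul_eq_sum_pow (hq : 1 < q) (ht : 0 < t)
    (hP : (X - C a) * P = ∑ i ∈ Finset.range t, (C u * (X - C a)) ^ (q ^ i)) :
    P.eval a = u := by
  rw [sum_pow_C_mul_X_sub_C hq.le] at hP
  obtain ⟨s, rfl⟩ : ∃ s, t = s + 1 := ⟨t - 1, by omega⟩
  have hvanish : ∀ i ∈ Finset.range s, u ^ (q ^ (i + 1)) * (a - a) ^ (q ^ (i + 1) - 1) = 0 := by
    intro i _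
    have : 1 < q ^ (i + 1) := Nat.one_lt_pow (Nat.succ_ne_zero i) hq
    rw [sub_self, zero_pow (by omega), mul_zero]
  rw [(monic_X_sub_C a).isRegular.left hP, eval_finsetSum, Finset.sum_range_succ',
    Finset.sum_eq_zero (by simpa using hvanish)]
  simp

theorem eval_eq_zero_iff_of_X_sub_C_mul_eq_sum_pow [IsDomain R] {b : R} (hab : a ≠ b)
    (hP : (X - C a) * P = ∑ i ∈ Finset.range t, (C u * (X - C a)) ^ (q ^ i)) :
    P.eval b = 0 ↔ ∑ i ∈ Finset.range t, (u * (b - a)) ^ (q ^ i) = 0 := by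
  have h := congrArg (eval b) hP
  simp only [eval_mul, eval_sub, eval_X, eval_C, eval_finsetSum, eval_pow] at h
  rw [← h, mul_eq_zero, or_iff_right (sub_ne_zero.mpr hab.symm)]

end Polynomial

section LinearAlgebra

variable {R M : Type*} [Semiring R] [Nontrivial R] [AddCommMonoid M] [Module R M]

theorem LinearIndependent.notMem_span_range_castLE {n k : ℕ} {u : Fin n → M}
    (hu : LinearIndependent R u) (hk : k ≤ n) {j : Fin n} (hj : k ≤ j) :
    u j ∉ Submodule.span R (Set.range fun i : Fin k => u (Fin.castLE hk i)) := by
  rw [← Function.comp_def, Set.range_comp]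
  refine hu.notMem_span_image ?_
  rintro ⟨i, hi⟩
  have := congrArg Fin.val hi
  rw [Fin.val_castLE] at this
  omega

end LinearAlgebra

section MulLeft

variable {B F ι : Type*} [CommSemiring B] [Field F] [Algebra B F] {u : ι → F} {τ : F}

theorem LinearIndependent.mul_left (hu : LinearIndependent B u) (hτ : τ ≠ 0) :
    LinearIndependent B fun j => τ * u j :=
  show LinearIndependent B (LinearMap.mulLeft B τ ∘ u) from
    hu.map_injOn (LinearMap.mulLeft B τ) (mul_right_injective₀ hτ).injOn

theorem span_range_mul_left_eq_top (hu : Submodule.span B (Set.range u) = ⊤) (hτ : τ ≠ 0) :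
    Submodule.span B (Set.range fun j => τ * u j) = ⊤ := by
  have hsurj : Function.Surjective (LinearMap.mulLeft B τ) := fun x =>
    ⟨τ⁻¹ * x, mul_inv_cancel_left₀ hτ x⟩
  rw [show (fun j => τ * u j) = LinearMap.mulLeft B τ ∘ u from rfl, Set.range_comp,
    Submodule.span_image, hu, Submodule.map_top, LinearMap.range_eq_top.mpr hsurj]

end MulLeft

/-- Properties of the modified check polynomials `p*_i = τ·p_i`, where
`u_1,…,u_{t-1}` is a `B`-basis of `K_{α*,ᾱ}` extended by `u_t` to a `B`-basis of
`F`, `p_i = p_{u_i,α*}`, `v_1,…,v_{t-1}` is another `B`-basis of `K_{α*,ᾱ}`, and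
`τ = v_1 / p_t(ᾱ)`:
(i) `p_t(ᾱ) ≠ 0` (so `τ` is well defined and nonzero);
(P1) `p*_i(ᾱ) = 0` for `i = 1,…,t-1`;
(P2) `p*_t(ᾱ) = v_1 ≠ 0`;
(P3) `{p*_1(α*),…,p*_t(α*)}` is a `B`-basis of `F`. -/
theorem modified_check_polynomials (p m t : ℕ) (ht : 2 ≤ t)
    (B F : Type*) [Field B] [Field F] [Algebra B F] [Fintype B]
    (hB : Fintype.card B = p ^ m)
    (αs αb : F) (hne : αs ≠ αb)
    (u : Fin t → F)
    (hu_li : LinearIndependent B u)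
    (hu_span : Submodule.span B (Set.range u) = ⊤)
    (hu_K : (Submodule.span B
        (Set.range fun j : Fin (t - 1) => u (Fin.castLE (Nat.sub_le t 1) j)) : Set F) =
      {z : F | ∑ i ∈ Finset.range t, (z * (αb - αs)) ^ ((p ^ m) ^ i) = 0})
    (v : Fin (t - 1) → F)
    (hv_li : LinearIndependent B v)
    (P : Fin t → F[X])
    (hP : ∀ j, (X - C αs) * P j =
      ∑ i ∈ Finset.range t, (C (u j) * (X - C αs)) ^ ((p ^ m) ^ i)) :
    (P ⟨t - 1, by omega⟩).eval αb ≠ 0 ∧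
    v ⟨0, by omega⟩ / (P ⟨t - 1, by omega⟩).eval αb ≠ 0 ∧
    (∀ j : Fin t, (j : ℕ) < t - 1 →
      (v ⟨0, by omega⟩ / (P ⟨t - 1, by omega⟩).eval αb) * (P j).eval αb = 0) ∧
    (v ⟨0, by omega⟩ / (P ⟨t - 1, by omega⟩).eval αb) * (P ⟨t - 1, by omega⟩).eval αb =
      v ⟨0, by omega⟩ ∧
    v ⟨0, by omega⟩ ≠ 0 ∧
    LinearIndependent B
      (fun j : Fin t =>
        (v ⟨0, by omega⟩ / (P ⟨t - 1, by omega⟩).eval αb) * (P j).eval αs) ∧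
    Submodule.span B
      (Set.range fun j : Fin t =>
        (v ⟨0, by omega⟩ / (P ⟨t - 1, by omega⟩).eval αb) * (P j).eval αs) = ⊤ := by
  have hq : 1 < p ^ m := hB ▸ Fintype.one_lt_card
  have hPs : ∀ j, (P j).eval αs = u j := fun j =>
    eval_self_of_X_sub_C_mul_eq_sum_pow hq (by omega) (hP j)
  have hroot : ∀ j, (P j).eval αb = 0 ↔ u j ∈ Submodule.span B
      (Set.range fun i : Fin (t - 1) => u (Fin.castLE (Nat.sub_le t 1) i)) := fun j => by
    rw [eval_eq_zero_iff_of_X_sub_C_mul_eq_sum_pow hne (hP j), ← SetLike.mem_coe, hu_K]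
    rfl
  have hP1 : ∀ j : Fin t, (j : ℕ) < t - 1 → (P j).eval αb = 0 := fun j hj =>
    (hroot j).2 (Submodule.subset_span ⟨⟨j, hj⟩, rfl⟩)
  have hPt : (P ⟨t - 1, by omega⟩).eval αb ≠ 0 := fun h =>
    hu_li.notMem_span_range_castLE (Nat.sub_le t 1) le_rfl ((hroot _).1 h)
  have hv0 : v ⟨0, by omega⟩ ≠ 0 := hv_li.ne_zero _
  have hτ := div_ne_zero hv0 hPt
  simp only [hPs]
  exact ⟨hPt, hτ, fun j hj => by rw [hP1 j hj, mul_zero], div_mul_cancel₀ _ hPt, hv0,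
    hu_li.mul_left hτ, span_range_mul_left_eq_top hu_span hτ⟩
end
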